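/- Let x lie in the open unit disk of ℝ² and v = (v₁,v₂) ∈ ℝ², v ≠ 0, and write n = (n₁,n₂) := x_b(x,v). Then the map x ↦ −2A_{v,x_b(x,v)} (with v fixed) is differentiable, and the 2×2 Jacobian matrices in x of its columns are: ∇_x(−2A¹_{v,x_b(x,v)}) = [[(4v₁²v₂²n₁³ + 2v₁v₂³(3n₁²n₂−n₂³) + 2v₂⁴(3n₁n₂²+n₁³))/(v·n)³, (−4v₁³v₂n₁³ − 2v₁²v₂²(3n₁²n₂−n₂³) − 2v₁v₂³(3n₁n₂²+n₁³))/(v·n)³],[(4v₂⁴n₂³ + 2v₁v₂³(3n₁n₂²−n₁³) + 2v₁²v₂²(3n₁²n₂+n₂³))/(v·n)³, (−4v₁v₂³n₂³ − 2v₁²v₂²(3n₁n₂²−n₁³) − 2v₁³v₂(3n₁²n₂+n₂³))/(v·n)³]] and ∇_x(−2A²_{v,x_b(x,v)}) = [[(−4v₁³v₂n₁³ − 2v₁v₂³(3n₁n₂²+n₁³) − 2v₁²v₂²(3n₁²n₂−n₂³))/(v·n)³, (4v₁⁴n₁³ + 2v₁²v₂²(3n₁n₂²+n₁³) + 2v₁³v₂(3n₁²n₂−n₂³))/(v·n)³],[(−4v₁v₂³n₂³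 − 2v₁³v₂(3n₁²n₂+n₂³) − 2v₁²v₂²(3n₁n₂²−n₁³))/(v·n)³, (4v₁²v₂²n₂³ + 2v₁⁴(3n₁²n₂+n₂³) + 2v₁³v₂(3n₁n₂²−n₁³))/(v·n)³]]. -/

import Mathlib

/-
Inside the open disk the backward exit time is the larger root of the quadratic `‖x - s v‖² = 1`,
`t_b = (⟪v, x⟫ + √Δ) / ‖v‖²` with `Δ = ⟪v, x⟫² - ‖v‖² (‖x‖² - 1) > 0`. It is smooth in `x` with
gradient `n / (v·n)`, where `n = x_b` and `v·n = -√Δ < 0`. Hence `D_x x_b = I - (v ⊗ n) / (v·n)`,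
the right factor of `A_{v,n}`. Each column of `A_{v,n}` is an explicit rational function of `n`
with denominator `v·n`, so the chain rule gives the Jacobians, and the stated entries are the
resulting rational identities in `v` and `n`.
-/

noncomputable section

open Matrix Real Set

/-- The Euclidean plane ℝ². -/
abbrev E : Type := EuclideanSpace ℝ (Fin 2)

/-- Dot product on ℝ². -/
def dot (a b : E) : ℝ := a 0 * b 0 + a 1 * b 1

/-- Build a vector of ℝ² from its components. -/
def toE (f : Fin 2 → ℝ) : E := (WithLp.equiv 2 (Fin 2 → ℝ)).symm f

/-- Tensor (outer) product a⊗b, (a⊗b)_{ij} = aᵢ bⱼ. -/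
def outer (a b : E) : Matrix (Fin 2) (Fin 2) ℝ := Matrix.of fun i j => a i * b j

/-- Matrix acting on a column vector. -/
def mulV (M : Matrix (Fin 2) (Fin 2) ℝ) (v : E) : E := toE fun i => M i 0 * v 0 + M i 1 * v 1

/-- Row vector multiplied by a matrix on the right. -/
def vMulM (w : E) (M : Matrix (Fin 2) (Fin 2) ℝ) : E := toE fun j => w 0 * M 0 j + w 1 * M 1 j

/-- Specular reflection matrix R_n = I - 2 n⊗n. -/
def Rmat (n : E) : Matrix (Fin 2) (Fin 2) ℝ := 1 - (2 : ℝ) • outer n n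

/-- The matrix A_{v,n} = ((v·n) I + n⊗v)(I - (v⊗n)/(v·n)). -/
def Amat (v n : E) : Matrix (Fin 2) (Fin 2) ℝ :=
  (dot v n • (1 : Matrix (Fin 2) (Fin 2) ℝ) + outer n v) *
    (1 - (dot v n)⁻¹ • outer v n)

/-- Counterclockwise rotation by π/2. -/
def Qmat : Matrix (Fin 2) (Fin 2) ℝ := !![0, -1; 1, 0]

/-- Backward exit time from the closed unit disk. -/
def tb (x v : E) : ℝ := sSup {s : ℝ | 0 ≤ s ∧ ‖x - s • v‖ ≤ 1}

/-- Backward exit point from the closed unit disk. -/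
def xb (x v : E) : E := x - tb x v • v

/-- The i-th column of a 2×2 matrix, as a vector of ℝ². -/
def colE (M : Matrix (Fin 2) (Fin 2) ℝ) (i : Fin 2) : E := toE fun k => M k i

/-- A 2×2 matrix as a continuous linear map ℝ² → ℝ². -/
def toCLM (M : Matrix (Fin 2) (Fin 2) ℝ) : E →L[ℝ] E :=
  LinearMap.toContinuousLinearMap (Matrix.toEuclideanLin M)

open scoped RealInnerProductSpace

section ExitTime

variable {F : Type*} [NormedAddCommGroup F] [InnerProductSpace ℝ F] {v x : F}

def exitDiscr (v x : F) : ℝ := ⟪v, x⟫ ^ 2 - ‖v‖ ^ 2 * (‖x‖ ^ 2 - 1)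

/-- The larger root `s` of `‖x - s • v‖ = 1`. -/
def exitTime (v x : F) : ℝ := (⟪v, x⟫ + √(exitDiscr v x)) / ‖v‖ ^ 2

lemma norm_sub_smul_sq (x v : F) (s : ℝ) :
    ‖x - s • v‖ ^ 2 = ‖x‖ ^ 2 - 2 * s * ⟪v, x⟫ + s ^ 2 * ‖v‖ ^ 2 := by
  rw [norm_sub_sq_real, inner_smul_right, real_inner_comm, norm_smul, mul_pow,
    Real.norm_eq_abs, sq_abs]
  ring

lemma sq_inner_le_exitDiscr (hx : ‖x‖ ≤ 1) : ⟪v, x⟫ ^ 2 ≤ exitDiscr v x := by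
  have : ‖x‖ ^ 2 ≤ 1 := pow_le_one₀ (norm_nonneg x) hx
  unfold exitDiscr
  nlinarith [sq_nonneg ‖v‖]

lemma exitDiscr_pos (hv : v ≠ 0) (hx : ‖x‖ < 1) : 0 < exitDiscr v x := by
  have : ‖x‖ ^ 2 < 1 := pow_lt_one₀ (norm_nonneg x) hx two_ne_zero
  have : 0 < ‖v‖ ^ 2 := by positivity
  unfold exitDiscr
  nlinarith [sq_nonneg ⟪v, x⟫]

lemma norm_sq_mul_exitTime (hv : v ≠ 0) (x : F) :
    ‖v‖ ^ 2 * exitTime v x = ⟪v, x⟫ + √(exitDiscr v x) := by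
  rw [exitTime, mul_div_cancel₀]
  positivity

lemma exitTime_nonneg (hx : ‖x‖ ≤ 1) : 0 ≤ exitTime v x := by
  have := Real.abs_le_sqrt (sq_inner_le_exitDiscr (v := v) hx)
  exact div_nonneg (by linarith [neg_abs_le ⟪v, x⟫]) (by positivity)

lemma norm_sub_exitTime_smul (hv : v ≠ 0) (hx : ‖x‖ ≤ 1) :
    ‖x - exitTime v x • v‖ = 1 := by
  have hs : √(exitDiscr v x) ^ 2 = ⟪v, x⟫ ^ 2 - ‖v‖ ^ 2 * (‖x‖ ^ 2 - 1) :=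
    Real.sq_sqrt ((sq_nonneg _).trans (sq_inner_le_exitDiscr hx))
  have ht := norm_sq_mul_exitTime hv x
  have hv2 : ‖v‖ ^ 2 ≠ 0 := by positivity
  refine (pow_left_inj₀ (norm_nonneg _) zero_le_one two_ne_zero).1 ?_
  rw [norm_sub_smul_sq, one_pow]
  refine mul_left_cancel₀ hv2 ?_
  linear_combination (‖v‖ ^ 2 * exitTime v x - ⟪v, x⟫ + √(exitDiscr v x)) * ht + hs

lemma le_exitTime_of_norm_sub_smul_le (hv : v ≠ 0) {s : ℝ} (hs : ‖x - s • v‖ ≤ 1) :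
    s ≤ exitTime v x := by
  have hv2 : 0 < ‖v‖ ^ 2 := by positivity
  have hs2 : ‖x - s • v‖ ^ 2 ≤ 1 := pow_le_one₀ (norm_nonneg _) hs
  rw [norm_sub_smul_sq] at hs2
  have hsq : (‖v‖ ^ 2 * s - ⟪v, x⟫) ^ 2 ≤ exitDiscr v x := by
    unfold exitDiscr; nlinarith
  have := (le_abs_self _).trans (Real.abs_le_sqrt hsq)
  refine le_of_mul_le_mul_left ?_ hv2
  rw [norm_sq_mul_exitTime hv]
  linarith

lemma sSup_exitSet_eq_exitTime (hv : v ≠ 0) (hx : ‖x‖ ≤ 1) :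
    sSup {s : ℝ | 0 ≤ s ∧ ‖x - s • v‖ ≤ 1} = exitTime v x :=
  IsGreatest.csSup_eq ⟨⟨exitTime_nonneg hx, (norm_sub_exitTime_smul hv hx).le⟩,
    fun _ hs => le_exitTime_of_norm_sub_smul_le hv hs.2⟩

lemma inner_sub_exitTime_smul (hv : v ≠ 0) (x : F) :
    ⟪v, x - exitTime v x • v⟫ = -√(exitDiscr v x) := by
  rw [inner_sub_right, inner_smul_right, real_inner_self_eq_norm_sq, mul_comm,
    norm_sq_mul_exitTime hv]
  ring

lemma hasFDerivAt_exitTime (hΔ : 0 < exitDiscr v x) :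
    HasFDerivAt (exitTime v)
      ((⟪v, x - exitTime v x • v⟫)⁻¹ • innerSL ℝ (x - exitTime v x • v)) x := by
  have hv : v ≠ 0 := by rintro rfl; simp [exitDiscr] at hΔ
  have hinner : HasFDerivAt (fun y => ⟪v, y⟫) (innerSL ℝ v) x := (innerSL ℝ v).hasFDerivAt
  have hΔ' : HasFDerivAt (exitDiscr v) _ x :=
    (hinner.pow 2).sub (((hasStrictFDerivAt_norm_sq x).hasFDerivAt.sub_const 1).const_mul _)
  have hτ := (hinner.add (hΔ'.sqrt hΔ.ne')).mul_const (‖v‖ ^ 2)⁻¹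
  simp only [← div_eq_mul_inv] at hτ
  refine hτ.congr_fderiv ?_
  have hs : 0 < √(exitDiscr v x) := Real.sqrt_pos.2 hΔ
  have hv2 : ‖v‖ ^ 2 ≠ 0 := by positivity
  have ht := norm_sq_mul_exitTime hv x
  ext w
  simp only [one_div, _root_.mul_inv_rev, Nat.add_one_sub_one, pow_one, nsmul_eq_mul,
    Nat.cast_ofNat, smul_add, _root_.add_apply, _root_.smul_apply, coe_innerSL_apply, smul_eq_mul,
    _root_.sub_apply, inner_sub_exitTime_smul hv, inv_neg, map_sub, map_smul, neg_smul,
    _root_.neg_apply]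
  field_simp
  linear_combination (-⟪v, w⟫) * ht

lemma hasFDerivAt_sub_exitTime_smul (hΔ : 0 < exitDiscr v x) :
    HasFDerivAt (fun y => y - exitTime v y • v)
      (ContinuousLinearMap.id ℝ F - ((⟪v, x - exitTime v x • v⟫)⁻¹ •
        innerSL ℝ (x - exitTime v x • v)).smulRight v) x :=
  (hasFDerivAt_id x).sub ((hasFDerivAt_exitTime hΔ).smul_const v)

end ExitTime

lemma dot_eq_inner (a b : E) : dot a b = ⟪a, b⟫ := by
  simp [dot, PiLp.inner_apply, Fin.sum_univ_two, mul_comm]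

lemma toCLM_apply (M : Matrix (Fin 2) (Fin 2) ℝ) (w : E) (k : Fin 2) :
    toCLM M w k = M k 0 * w 0 + M k 1 * w 1 := by
  fin_cases k <;> simp [toCLM, Matrix.toLpLin_apply]

lemma toCLM_mul (M N : Matrix (Fin 2) (Fin 2) ℝ) : toCLM (M * N) = toCLM M ∘L toCLM N := by
  ext w : 1
  simp [toCLM, Matrix.toLpLin_apply]

lemma toCLM_smul (c : ℝ) (M : Matrix (Fin 2) (Fin 2) ℝ) : toCLM (c • M) = c • toCLM M := by
  ext w : 1
  simp [toCLM, Matrix.toLpLin_apply]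

lemma colE_smul (c : ℝ) (M : Matrix (Fin 2) (Fin 2) ℝ) (j : Fin 2) :
    colE (c • M) j = c • colE M j := by
  ext k; simp [colE, toE]

section ExitPoint

variable {x v : E}

lemma xb_eq (hv : v ≠ 0) (hx : ‖x‖ ≤ 1) : xb x v = x - exitTime v x • v := by
  rw [xb, tb, sSup_exitSet_eq_exitTime hv hx]

lemma dot_xb_neg (hv : v ≠ 0) (hx : ‖x‖ < 1) : dot v (xb x v) < 0 := by
  rw [dot_eq_inner, xb_eq hv hx.le, inner_sub_exitTime_smul hv, neg_lt_zero]
  exact Real.sqrt_pos.2 (exitDiscr_pos hv hx)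

lemma hasFDerivAt_xb (hv : v ≠ 0) (hx : ‖x‖ < 1) :
    HasFDerivAt (xb · v) (toCLM (1 - (dot v (xb x v))⁻¹ • outer v (xb x v))) x := by
  have hball : ∀ᶠ y in nhds x, xb y v = y - exitTime v y • v := by
    filter_upwards [Metric.isOpen_ball.mem_nhds (mem_ball_zero_iff.2 hx)] with y hy
    exact xb_eq hv (mem_ball_zero_iff.1 hy).le
  refine ((hasFDerivAt_sub_exitTime_smul (exitDiscr_pos hv hx)).congr_of_eventuallyEq hball)
    |>.congr_fderiv ?_
  rw [← xb_eq hv hx.le, ← dot_eq_inner]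
  ext w k
  fin_cases k <;>
    simp [toCLM_apply, outer, dot_eq_inner, PiLp.inner_apply, Fin.sum_univ_two] <;> ring

end ExitPoint

lemma colE_Amat {v m : E} (h : dot v m ≠ 0) (j : Fin 2) :
    colE (Amat v m) j = dot v m • EuclideanSpace.single j 1 - m j • v + v j • m
      - (dot v v * (dot v m)⁻¹ * m j) • m := by
  ext k
  fin_cases j <;> fin_cases k <;>
    simp [colE, toE, Amat, outer, Matrix.mul_apply, Fin.sum_univ_two] <;> field_simp <;>
    simp only [dot] <;> ring

def colAmatJac (v m : E) (j : Fin 2) : Matrix (Fin 2) (Fin 2) ℝ :=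
  outer (EuclideanSpace.single j 1) v - outer v (EuclideanSpace.single j 1) + v j • 1
    - (dot v v / dot v m) • (m j • 1 + outer m (EuclideanSpace.single j 1))
    + (dot v v * m j / dot v m ^ 2) • outer m v

lemma hasFDerivAt_colE_Amat {v m : E} (h : dot v m ≠ 0) (j : Fin 2) :
    HasFDerivAt (fun n => colE (Amat v n) j) (toCLM (colAmatJac v m j)) m := by
  have hdot : HasFDerivAt (dot v) (innerSL ℝ v) m := by
    rw [show dot v = innerSL ℝ v from funext (dot_eq_inner v)]
    exact (innerSL ℝ v).hasFDerivAt
  have hcoord := PiLp.hasFDerivAt_apply (𝕜 := ℝ) 2 m j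
  have hinv := (hasDerivAt_inv h).comp_hasFDerivAt m hdot
  have hform := (((hdot.smul_const (EuclideanSpace.single j 1)).sub (hcoord.smul_const v)).add
    ((hasFDerivAt_id m).const_smul (v j))).sub
    (((hinv.const_mul (dot v v)).mul hcoord).smul (hasFDerivAt_id m))
  have hev : ∀ᶠ n in nhds m, colE (Amat v n) j = dot v n • EuclideanSpace.single j 1 - n j • v
      + v j • n - (dot v v * (dot v n)⁻¹ * n j) • n := by
    filter_upwards [hdot.continuousAt.eventually_ne h] with n hn
    exact colE_Amat hn j
  refine (hform.congr_of_eventuallyEq hev).congr_fderiv ?_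
  ext w k
  fin_cases j <;> fin_cases k <;>
    simp [toCLM_apply, colAmatJac, outer, ← dot_eq_inner] <;> field_simp <;>
    simp only [dot] <;> ring

/-- Jacobians in x of the columns of x ↦ −2A_{v,x_b(x,v)}. -/
theorem stmt10 (x v : E) (hx : ‖x‖ < 1) (hv : v ≠ 0) :
    let n := xb x v
    let d := dot v n
    HasFDerivAt (fun y => colE ((-2 : ℝ) • Amat v (xb y v)) 0)
      (toCLM
        !![(4 * v 0 ^ 2 * v 1 ^ 2 * n 0 ^ 3
              + 2 * v 0 * v 1 ^ 3 * (3 * n 0 ^ 2 * n 1 - n 1 ^ 3)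
              + 2 * v 1 ^ 4 * (3 * n 0 * n 1 ^ 2 + n 0 ^ 3)) / d ^ 3,
           (-4 * v 0 ^ 3 * v 1 * n 0 ^ 3
              - 2 * v 0 ^ 2 * v 1 ^ 2 * (3 * n 0 ^ 2 * n 1 - n 1 ^ 3)
              - 2 * v 0 * v 1 ^ 3 * (3 * n 0 * n 1 ^ 2 + n 0 ^ 3)) / d ^ 3;
           (4 * v 1 ^ 4 * n 1 ^ 3
              + 2 * v 0 * v 1 ^ 3 * (3 * n 0 * n 1 ^ 2 - n 0 ^ 3)
              + 2 * v 0 ^ 2 * v 1 ^ 2 * (3 * n 0 ^ 2 * n 1 + n 1 ^ 3)) / d ^ 3,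
           (-4 * v 0 * v 1 ^ 3 * n 1 ^ 3
              - 2 * v 0 ^ 2 * v 1 ^ 2 * (3 * n 0 * n 1 ^ 2 - n 0 ^ 3)
              - 2 * v 0 ^ 3 * v 1 * (3 * n 0 ^ 2 * n 1 + n 1 ^ 3)) / d ^ 3]) x ∧
    HasFDerivAt (fun y => colE ((-2 : ℝ) • Amat v (xb y v)) 1)
      (toCLM
        !![(-4 * v 0 ^ 3 * v 1 * n 0 ^ 3
              - 2 * v 0 * v 1 ^ 3 * (3 * n 0 * n 1 ^ 2 + n 0 ^ 3)
              - 2 * v 0 ^ 2 * v 1 ^ 2 * (3 * n 0 ^ 2 * n 1 - n 1 ^ 3)) / d ^ 3,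
           (4 * v 0 ^ 4 * n 0 ^ 3
              + 2 * v 0 ^ 2 * v 1 ^ 2 * (3 * n 0 * n 1 ^ 2 + n 0 ^ 3)
              + 2 * v 0 ^ 3 * v 1 * (3 * n 0 ^ 2 * n 1 - n 1 ^ 3)) / d ^ 3;
           (-4 * v 0 * v 1 ^ 3 * n 1 ^ 3
              - 2 * v 0 ^ 3 * v 1 * (3 * n 0 ^ 2 * n 1 + n 1 ^ 3)
              - 2 * v 0 ^ 2 * v 1 ^ 2 * (3 * n 0 * n 1 ^ 2 - n 0 ^ 3)) / d ^ 3,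
           (4 * v 0 ^ 2 * v 1 ^ 2 * n 1 ^ 3
              + 2 * v 0 ^ 4 * (3 * n 0 ^ 2 * n 1 + n 1 ^ 3)
              + 2 * v 0 ^ 3 * v 1 * (3 * n 0 * n 1 ^ 2 - n 0 ^ 3)) / d ^ 3]) x := by
  intro n d
  have hd : d ≠ 0 := (dot_xb_neg hv hx).ne
  have hd_coord : v 0 * n 0 + v 1 * n 1 ≠ 0 := hd
  have hcol (j : Fin 2) : HasFDerivAt (fun y => colE ((-2 : ℝ) • Amat v (xb y v)) j)
      (toCLM ((-2 : ℝ) • (colAmatJac v n j * (1 - d⁻¹ • outer v n)))) x := by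
    rw [toCLM_smul, toCLM_mul]
    simp only [colE_smul]
    exact ((hasFDerivAt_colE_Amat hd j).comp x (hasFDerivAt_xb hv hx)).const_smul (-2 : ℝ)
  refine ⟨(hcol 0).congr_fderiv ?_, (hcol 1).congr_fderiv ?_⟩ <;> congr 1 <;> ext k l <;>
    fin_cases k <;> fin_cases l <;>
    simp [d, dot, colAmatJac, outer, Matrix.mul_apply, Fin.sum_univ_two] <;> field_simp <;> ring
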